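/- Let M : ℍ × 𝕃 → 𝕆 be a deterministic program with high-security input set ℍ and low-security input set 𝕃. Then ME[U](M) = log₂(|𝕆_𝕃|/|𝕃|), where 𝕆_𝕃 = {(o,ℓ) | ∃h ∈ ℍ. o = M(h,ℓ)}. -/

import Mathlib

variable {Hi Li Oi : Type*}

/-- The uniform distribution on a finite type. -/
noncomputable def unif (X : Type*) [Fintype X] : X → ℝ :=
  fun _ => (Fintype.card X : ℝ)⁻¹

/-- Marginal probability `μ(L = ℓ)`. -/
noncomputable def pL [Fintype Hi] (μ : Hi × Li → ℝ) (ℓ : Li) : ℝ := ∑ h, μ (h, ℓ)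

/-- Joint probability `μ(O = o, L = ℓ)` where `O = M(H,L)`. -/
noncomputable def pOL [Fintype Hi] [DecidableEq Oi] (M : Hi × Li → Oi) (μ : Hi × Li → ℝ)
    (o : Oi) (ℓ : Li) : ℝ := ∑ h, if M (h, ℓ) = o then μ (h, ℓ) else 0

/-- Conditional vulnerability `𝓥[μ](H|L)`. -/
noncomputable def VHL [Fintype Hi] [Fintype Li] [Nonempty Hi] (μ : Hi × Li → ℝ) : ℝ :=
  ∑ ℓ : Li, pL μ ℓ *
    Finset.univ.sup' Finset.univ_nonempty (fun h : Hi => μ (h, ℓ) / pL μ ℓ)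

/-- Conditional vulnerability `𝓥[μ](H|O,L)` where `O = M(H,L)`. -/
noncomputable def VHOL [Fintype Hi] [Fintype Li] [Fintype Oi] [DecidableEq Oi] [Nonempty Hi]
    (M : Hi × Li → Oi) (μ : Hi × Li → ℝ) : ℝ :=
  ∑ ℓ : Li, ∑ o : Oi, pOL M μ o ℓ *
    Finset.univ.sup' Finset.univ_nonempty
      (fun h : Hi => (if M (h, ℓ) = o then μ (h, ℓ) else 0) / pOL M μ o ℓ)

/-- Min-entropy-based QIF `ME[μ](M) = 𝓗∞[μ](H|L) − 𝓗∞[μ](H|O,L)`. -/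
noncomputable def ME [Fintype Hi] [Fintype Li] [Fintype Oi] [DecidableEq Oi] [Nonempty Hi]
    (M : Hi × Li → Oi) (μ : Hi × Li → ℝ) : ℝ :=
  Real.logb 2 (1 / VHL μ) - Real.logb 2 (1 / VHOL M μ)

open Finset

/-!
For a nonnegative `μ` the normalisations cancel: `𝓥(H|L) = ∑_ℓ max_h μ(h, ℓ)` and
`𝓥(H|O,L) = ∑_(o,ℓ) max_h μ(h, ℓ)·[M(h, ℓ) = o]`. For a constant `μ ≡ c` the first sum is
`|𝕃|·c` and the second `|𝕆_𝕃|·c`, since the inner maximum is `c` exactly when `o` is an output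
on `ℓ`; so `c` cancels in `ME = log₂(𝓥(H|O,L) / 𝓥(H|L))`.
-/

theorem sum_mul_sup'_div_sum {ι : Type*} [Fintype ι] [Nonempty ι] {f : ι → ℝ}
    (hf : ∀ i, 0 ≤ f i) :
    (∑ i, f i) * univ.sup' univ_nonempty (fun i => f i / ∑ j, f j) =
      univ.sup' univ_nonempty f := by
  rcases (sum_nonneg fun i _ => hf i).eq_or_lt with hzero | hpos
  · have hf0 : f = 0 := funext fun i =>
      (sum_eq_zero_iff_of_nonneg (fun j _ => hf j)).mp hzero.symm i (mem_univ i)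
    simp [hf0]
  · rw [← sup'_div₀ hpos.le, mul_div_cancel₀ _ hpos.ne']

theorem sup'_ite_const {ι : Type*} [Fintype ι] [Nonempty ι] (p : ι → Prop) [DecidablePred p]
    {c : ℝ} (hc : 0 ≤ c) :
    univ.sup' univ_nonempty (fun i => if p i then c else 0) = if ∃ i, p i then c else 0 := by
  by_cases hp : ∃ i, p i
  · obtain ⟨i₀, hi₀⟩ := hp
    rw [if_pos ⟨i₀, hi₀⟩]
    refine le_antisymm (sup'_le _ _ fun i _ => ?_) (le_sup'_of_le _ (mem_univ i₀) (by simp [hi₀]))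
    split_ifs
    exacts [le_rfl, hc]
  · simp_all

/-- The set `𝕆_𝕃`. -/
def observablePairs [Fintype Hi] [Fintype Li] [Fintype Oi] [DecidableEq Oi]
    (M : Hi × Li → Oi) : Finset (Oi × Li) :=
  univ.filter fun p => ∃ h : Hi, p.1 = M (h, p.2)

theorem ncard_setOf_eq_card_observablePairs [Fintype Hi] [Fintype Li] [Fintype Oi]
    [DecidableEq Oi] (M : Hi × Li → Oi) :
    Set.ncard {p : Oi × Li | ∃ h : Hi, p.1 = M (h, p.2)} = #(observablePairs M) := by
  rw [← Set.ncard_coe_finset, observablePairs, coe_filter]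
  simp

theorem observablePairs_nonempty [Fintype Hi] [Fintype Li] [Fintype Oi] [DecidableEq Oi]
    [Nonempty Hi] [Nonempty Li] (M : Hi × Li → Oi) : (observablePairs M).Nonempty := by
  obtain ⟨h⟩ := ‹Nonempty Hi›
  obtain ⟨ℓ⟩ := ‹Nonempty Li›
  exact ⟨(M (h, ℓ), ℓ), mem_filter.mpr ⟨mem_univ _, h, rfl⟩⟩

section Vulnerability

variable [Fintype Hi] [Fintype Li] [Nonempty Hi]

theorem VHL_eq_sum_sup' {μ : Hi × Li → ℝ} (hμ : ∀ x, 0 ≤ μ x) :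
    VHL μ = ∑ ℓ, univ.sup' univ_nonempty (fun h => μ (h, ℓ)) :=
  sum_congr rfl fun _ _ => sum_mul_sup'_div_sum fun _ => hμ _

theorem VHOL_eq_sum_sup' [Fintype Oi] [DecidableEq Oi] (M : Hi × Li → Oi) {μ : Hi × Li → ℝ}
    (hμ : ∀ x, 0 ≤ μ x) :
    VHOL M μ = ∑ ℓ, ∑ o, univ.sup' univ_nonempty
      (fun h => if M (h, ℓ) = o then μ (h, ℓ) else 0) :=
  sum_congr rfl fun _ _ => sum_congr rfl fun _ _ =>
    sum_mul_sup'_div_sum fun _ => by split_ifs <;> simp [hμ]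

theorem VHL_const {c : ℝ} (hc : 0 ≤ c) : VHL (fun _ : Hi × Li => c) = Fintype.card Li * c := by
  simp [VHL_eq_sum_sup' fun _ => hc]

theorem VHOL_const [Fintype Oi] [DecidableEq Oi] (M : Hi × Li → Oi) {c : ℝ} (hc : 0 ≤ c) :
    VHOL M (fun _ => c) = #(observablePairs M) * c := by
  simp_rw [VHOL_eq_sum_sup' M fun _ => hc, sup'_ite_const _ hc, observablePairs, card_filter,
    Nat.cast_sum, sum_mul, Fintype.sum_prod_type]
  rw [sum_comm]
  refine sum_congr rfl fun ℓ _ => sum_congr rfl fun o _ => ?_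
  simp [eq_comm]

theorem ME_const [Fintype Oi] [DecidableEq Oi] [Nonempty Li] (M : Hi × Li → Oi) {c : ℝ}
    (hc : 0 < c) :
    ME M (fun _ => c) = Real.logb 2 (#(observablePairs M) / Fintype.card Li) := by
  have hK : (0 : ℝ) < #(observablePairs M) := by
    exact_mod_cast (observablePairs_nonempty M).card_pos
  have hn : (0 : ℝ) < Fintype.card Li := by exact_mod_cast Fintype.card_pos
  rw [ME, VHL_const hc.le, VHOL_const M hc.le, one_div, one_div, Real.logb_inv, Real.logb_inv,
    neg_sub_neg, ← Real.logb_div (by positivity) (by positivity), mul_div_mul_right _ _ hc.ne']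

end Vulnerability

/-- `ME[U](M) = log₂(|𝕆_𝕃|/|𝕃|)` with `𝕆_𝕃 = {(o,ℓ) | ∃h. o = M(h,ℓ)}`. -/
theorem ME_unif_eq
    [Fintype Hi] [Fintype Li] [Fintype Oi] [DecidableEq Oi] [Nonempty Hi] [Nonempty Li]
    (M : Hi × Li → Oi) :
    ME M (unif (Hi × Li)) =
      Real.logb 2
        ((Set.ncard {p : Oi × Li | ∃ h : Hi, p.1 = M (h, p.2)} : ℝ) /
          (Fintype.card Li : ℝ)) := by
  rw [ncard_setOf_eq_card_observablePairs]
  exact ME_const M (inv_pos.mpr (by exact_mod_cast Fintype.card_pos))
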